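/- Let B be a unital C*-algebra, let u ∈ B be a unitary, and let n ≥ 1. Then there exists a continuous path t ↦ W_t, t ∈ [0,1], of unitary elements of the C*-algebra of n×n matrices over B such that: (a) W₀ is the companion-type matrix with (W₀)_{i+1,i} = 1 for 1 ≤ i ≤ n−1, (W₀)_{1,n} = u^n, and all other entries 0; (b) W₁ = diag(u, u, …, u); (c) for every t ∈ [0,1] and every a ∈ B, W_t · diag(u^{−1} a u, u^{−2} a u², …, u^{−n} a u^{n}) · W_t* = diag(a, u^{−1} a u, …, u^{−(n−1)} a u^{n−1}). -/

import Mathlib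

/-!
Write `W_t = diag(u⁻ⁱ) · V_t · diag(uʲ⁺¹)`, the Schur product of a path `V_t` of complex unitary
matrices with `(u^{j-i+1})ᵢⱼ`. Conjugating by the outer diagonal factor turns
`diag(u^{-(i+1)} a u^{i+1})` into the scalar matrix `a`, which commutes with the complex matrix
`V_t`, so conjugation by `W_t` does not depend on `t`. The path `V_t` from the cyclic shift to `1`
exists because permutation matrices are products of transposition matrices, and a transposition
matrix `s` (a self-adjoint unitary) is joined to `1` by `c ↦ ((1 + c) / 2) • 1 + ((1 - c) / 2) • s`
along the unit circle.
-/

section SelfAdjointUnitary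

variable {A : Type*} [Ring A] [Algebra ℂ A]

lemma smul_one_add_smul_mul_smul_one_add_smul {s : A} (hs : s * s = 1) (α β γ δ : ℂ) :
    (α • (1 : A) + β • s) * (γ • 1 + δ • s) = (α * γ + β * δ) • 1 + (α * δ + β * γ) • s := by
  simp only [add_mul, mul_add, smul_mul_smul, one_mul, mul_one, hs]
  module

variable [StarRing A] [StarModule ℂ A]

lemma smul_one_add_smul_mem_unitary {s : A} (hs : s ∈ unitary A) (hs' : IsSelfAdjoint s)
    {α β : ℂ} (h₁ : star α * α + star β * β = 1) (h₂ : star α * β + star β * α = 0) :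
    α • (1 : A) + β • s ∈ unitary A := by
  have hss : s * s = 1 := by simpa [hs'.star_eq] using Unitary.star_mul_self_of_mem hs
  have hstar : star (α • (1 : A) + β • s) = star α • 1 + star β • s := by
    simp only [star_add, star_smul, star_one, hs'.star_eq]
  rw [Unitary.mem_iff, hstar, smul_one_add_smul_mul_smul_one_add_smul hss,
    smul_one_add_smul_mul_smul_one_add_smul hss]
  constructor
  · rw [h₁, h₂, one_smul, zero_smul, add_zero]
  · rw [mul_comm α, mul_comm β, mul_comm α, mul_comm β, add_comm (star β * α), h₁, h₂,
      one_smul, zero_smul, add_zero]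

variable [TopologicalSpace A] [IsTopologicalRing A] [ContinuousStar A] [ContinuousSMul ℂ A]

lemma mem_pathComponentOne_of_isSelfAdjoint (s : unitary A) (hs : IsSelfAdjoint (s : A)) :
    s ∈ Subgroup.pathComponentOne (unitary A) := by
  have hc (c : Circle) : star (c : ℂ) * c = 1 := by simp [Complex.conj_mul', Circle.norm_coe]
  let f : Circle → unitary A := fun c =>
    ⟨((1 + c) / 2 : ℂ) • 1 + ((1 - c) / 2 : ℂ) • (s : A),
      smul_one_add_smul_mem_unitary s.2 hs
        (by simp only [star_div₀, star_add, star_sub, star_one, star_ofNat]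
            linear_combination hc c / 2)
        (by simp only [star_div₀, star_add, star_sub, star_one, star_ofNat]
            linear_combination -hc c / 2)⟩
  have hf : Continuous f := by fun_prop
  have hf₁ : f 1 = 1 := Subtype.ext (by simp [f])
  have hf₂ : f (-1) = s := Subtype.ext (by norm_num [f])
  show Joined 1 s
  exact hf₁ ▸ hf₂ ▸ (PathConnectedSpace.joined 1 (-1)).map hf

end SelfAdjointUnitary

namespace Matrix

variable {ι : Type*} [DecidableEq ι]

lemma permMatrix_apply {R : Type*} [Zero R] [One R] (σ : Equiv.Perm ι) (i j : ι) :
    σ.permMatrix R i j = if σ i = j then 1 else 0 := by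
  simp [PEquiv.toMatrix_apply]

variable [Fintype ι]

lemma permMatrix_mem_unitary {R : Type*} [CommSemiring R] [StarRing R] (σ : Equiv.Perm ι) :
    σ.permMatrix R ∈ unitary (Matrix ι ι R) := by
  rw [Unitary.mem_iff, star_eq_conjTranspose, conjTranspose_permMatrix, ← permMatrix_mul,
    ← permMatrix_mul]
  simp

variable (R : Type*) [CommSemiring R] [StarRing R] in
def permUnitaryHom : Equiv.Perm ι →* unitary (Matrix ι ι R) :=
  (permMatrixHom (n := ι) (R := R)).codRestrict _ fun σ => permMatrix_mem_unitary σ⁻¹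

@[simp]
lemma coe_permUnitaryHom {R : Type*} [CommSemiring R] [StarRing R] (σ : Equiv.Perm ι) :
    (permUnitaryHom R σ : Matrix ι ι R) = σ⁻¹.permMatrix R :=
  rfl

lemma permUnitaryHom_mem_pathComponentOne (σ : Equiv.Perm ι) :
    permUnitaryHom ℂ σ ∈ Subgroup.pathComponentOne (unitary (Matrix ι ι ℂ)) := by
  have h : Subgroup.closure {τ : Equiv.Perm ι | τ.IsSwap} ≤
      (Subgroup.pathComponentOne _).comap (permUnitaryHom ℂ) := by
    rw [Subgroup.closure_le]
    rintro _ ⟨x, y, -, rfl⟩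
    exact mem_pathComponentOne_of_isSelfAdjoint _ (by simp [IsSelfAdjoint, star_eq_conjTranspose])
  rw [Equiv.Perm.closure_isSwap] at h
  exact h (Subgroup.mem_top σ)

section StarRing

variable {A : Type*} [Ring A] [StarRing A]

lemma diagonal_mem_unitary (d : ι → unitary A) :
    diagonal (fun i => (d i : A)) ∈ unitary (Matrix ι ι A) := by
  simp [Unitary.mem_iff, star_eq_conjTranspose, diagonal_conjTranspose, diagonal_mul_diagonal]

lemma diagonal_mul_diagonal_mul_star_diagonal (d x : ι → A) :
    diagonal d * diagonal x * star (diagonal d) = diagonal fun i => d i * x i * star (d i) := by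
  simp [star_eq_conjTranspose, diagonal_conjTranspose, diagonal_mul_diagonal]

lemma diagonal_conj_diagonal_star_mul_mul (e : ι → unitary A) (a : A) :
    diagonal (fun i => (e i : A)) * diagonal (fun i => star (e i : A) * a * e i) *
      star (diagonal fun i => (e i : A)) = diagonal fun _ => a := by
  rw [diagonal_mul_diagonal_mul_star_diagonal]
  congr 1
  funext i
  have h := Unitary.mul_star_self_of_mem (e i).2
  calc (e i : A) * (star (e i : A) * a * e i) * star (e i : A)
      = (e i * star (e i : A)) * a * (e i * star (e i : A)) := by simp only [mul_assoc]
    _ = a := by rw [h, one_mul, mul_one]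

lemma mul_mul_star_eq_of_commute {U M : Matrix ι ι A} (hU : U ∈ unitary (Matrix ι ι A))
    (h : Commute U M) : U * M * star U = M := by
  rw [h.eq, mul_assoc, Unitary.mul_star_self_of_mem hU, mul_one]

end StarRing

section Algebra

variable {R A : Type*} [CommSemiring R] [Ring A] [Algebra R A]

lemma commute_map_algebraMap_diagonal_const (V : Matrix ι ι R) (a : A) :
    Commute (V.map (algebraMap R A)) (diagonal fun _ => a) := by
  ext i j
  simp [mul_diagonal, diagonal_mul, Algebra.commutes]

variable [StarRing A]

/-- The Schur product of `V` with `(star (d i) * e j)ᵢⱼ`; for `d i = uⁱ` and `e j = uʲ⁺¹` this is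
the paper's `V ∗ (u^{j-i+1})ᵢⱼ`. -/
def schurTwist (d e : ι → unitary A) (V : Matrix ι ι R) : Matrix ι ι A :=
  of fun i j => V i j • (star (d i : A) * e j)

lemma schurTwist_eq (d e : ι → unitary A) (V : Matrix ι ι R) :
    schurTwist d e V =
      diagonal (fun i => star (d i : A)) * V.map (algebraMap R A) * diagonal (fun i => (e i : A)) := by
  ext i j
  simp [schurTwist, mul_diagonal, diagonal_mul, Algebra.smul_def, Algebra.commutes, mul_assoc]

variable [StarRing R] [StarModule R A]

lemma map_algebraMap_mem_unitary {V : Matrix ι ι R} (hV : V ∈ unitary (Matrix ι ι R)) :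
    V.map (algebraMap R A) ∈ unitary (Matrix ι ι A) := by
  have hstar : star (V.map (algebraMap R A)) = (star V).map (algebraMap R A) :=
    (conjTranspose_map _ fun r => algebraMap_star_comm r).symm
  rw [Unitary.mem_iff, hstar, ← Matrix.map_mul, ← Matrix.map_mul,
    Unitary.star_mul_self_of_mem hV, Unitary.mul_star_self_of_mem hV,
    Matrix.map_one _ (map_zero _) (map_one _)]
  exact ⟨rfl, rfl⟩

lemma schurTwist_mem_unitary (d e : ι → unitary A) {V : Matrix ι ι R}
    (hV : V ∈ unitary (Matrix ι ι R)) : schurTwist d e V ∈ unitary (Matrix ι ι A) := by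
  rw [schurTwist_eq]
  exact mul_mem (mul_mem (diagonal_mem_unitary (star d)) (map_algebraMap_mem_unitary hV))
    (diagonal_mem_unitary e)

lemma schurTwist_mul_diagonal_mul_star (d e : ι → unitary A) {V : Matrix ι ι R}
    (hV : V ∈ unitary (Matrix ι ι R)) (a : A) :
    schurTwist d e V * diagonal (fun i => star (e i : A) * a * e i) * star (schurTwist d e V) =
      diagonal fun i => star (d i : A) * a * d i := by
  have hVa : V.map (algebraMap R A) * diagonal (fun _ => a) * star (V.map (algebraMap R A)) =
      diagonal fun _ => a :=
    mul_mul_star_eq_of_commute (map_algebraMap_mem_unitary hV)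
      (commute_map_algebraMap_diagonal_const V a)
  calc schurTwist d e V * diagonal (fun i => star (e i : A) * a * e i) * star (schurTwist d e V)
      = diagonal (fun i => star (d i : A)) * (V.map (algebraMap R A) *
          (diagonal (fun i => (e i : A)) * diagonal (fun i => star (e i : A) * a * e i) *
            star (diagonal fun i => (e i : A))) * star (V.map (algebraMap R A))) *
          star (diagonal (fun i => star (d i : A))) := by
        simp only [schurTwist_eq, star_mul, mul_assoc]
    _ = diagonal fun i => star (d i : A) * a * d i := by
        rw [diagonal_conj_diagonal_star_mul_mul, hVa, diagonal_mul_diagonal_mul_star_diagonal]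
        simp

end Algebra

end Matrix

lemma Fin.eq_finRotate_iff {n : ℕ} (i j : Fin n) :
    i = finRotate n j ↔ (i : ℕ) = j + 1 ∨ (i : ℕ) = 0 ∧ (j : ℕ) = n - 1 := by
  cases n with
  | zero => exact j.elim0
  | succ m =>
    rw [Fin.ext_iff, coe_finRotate]
    split_ifs with h <;> simp only [Fin.ext_iff, Fin.val_last] at h <;> omega

section UnitaryZPow

variable {A : Type*} [Monoid A] [StarMul A]

lemma Unitary.coe_zpow_neg (u : unitary A) (k : ℤ) :
    ((u ^ (-k) : unitary A) : A) = star ((u ^ k : unitary A) : A) := by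
  rw [zpow_neg, ← Unitary.star_eq_inv, Unitary.coe_star]

lemma Unitary.star_coe_zpow_mul_coe_zpow (u : unitary A) (k l : ℤ) :
    star ((u ^ k : unitary A) : A) * ((u ^ l : unitary A) : A) =
      ((u ^ (l - k) : unitary A) : A) := by
  rw [← coe_zpow_neg, ← Submonoid.coe_mul, ← zpow_add, neg_add_eq_sub]

end UnitaryZPow

theorem exists_unitary_path_companion_to_diagonal_general
    {B : Type*} [CStarAlgebra B] (u : unitary B) {n : ℕ} :
    ∃ W : ℝ → Matrix (Fin n) (Fin n) B,
      ContinuousOn W (Set.Icc 0 1) ∧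
      (∀ i j : Fin n, W 0 i j =
        if (i : ℕ) = (j : ℕ) + 1 then 1
        else if (i : ℕ) = 0 ∧ (j : ℕ) = n - 1 then ((u ^ n : unitary B) : B)
        else 0) ∧
      W 1 = Matrix.diagonal (fun _ : Fin n => (u : B)) ∧
      ∀ t ∈ Set.Icc (0 : ℝ) 1,
        W t ∈ unitary (Matrix (Fin n) (Fin n) B) ∧
        ∀ a : B,
          W t * Matrix.diagonal
                (fun i : Fin n => ((u ^ (-((i : ℤ) + 1)) : unitary B) : B) * a *
                  ((u ^ ((i : ℤ) + 1) : unitary B) : B)) * star (W t) =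
            Matrix.diagonal
              (fun i : Fin n => ((u ^ (-(i : ℤ)) : unitary B) : B) * a *
                ((u ^ ((i : ℤ)) : unitary B) : B)) := by
  obtain ⟨γ⟩ : Joined (Matrix.permUnitaryHom ℂ (finRotate n)) 1 :=
    (Matrix.permUnitaryHom_mem_pathComponentOne (finRotate n)).symm
  let d : Fin n → unitary B := fun i => u ^ (i : ℤ)
  let e : Fin n → unitary B := fun i => u ^ ((i : ℤ) + 1)
  refine ⟨fun t => Matrix.schurTwist d e (γ.extend t : Matrix (Fin n) (Fin n) ℂ), ?_, ?_, ?_,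
    fun t _ => ⟨Matrix.schurTwist_mem_unitary d e (γ.extend t).2, fun a => ?_⟩⟩
  · simp only [Matrix.schurTwist_eq]
    exact Continuous.continuousOn (by fun_prop)
  · intro i j
    have hj := j.isLt
    simp only [Matrix.schurTwist, Matrix.of_apply, Path.extend_zero, Matrix.coe_permUnitaryHom,
      Matrix.permMatrix_apply, Equiv.Perm.inv_eq_iff_eq, Fin.eq_finRotate_iff, ite_smul, one_smul,
      zero_smul, d, e, Unitary.star_coe_zpow_mul_coe_zpow]
    split_ifs with hij h₁ h₂ h₁ h₂
    · rw [show ((j : ℕ) : ℤ) + 1 - (i : ℕ) = 0 by omega, zpow_zero, OneMemClass.coe_one]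
    · rw [show ((j : ℕ) : ℤ) + 1 - (i : ℕ) = n by omega, zpow_natCast]
    all_goals tauto
  · ext i j
    simp only [Matrix.schurTwist, Matrix.of_apply, Path.extend_one, OneMemClass.coe_one,
      Matrix.one_apply, Matrix.diagonal_apply, ite_smul, one_smul, zero_smul, d, e,
      Unitary.star_coe_zpow_mul_coe_zpow]
    split_ifs with hij
    · rw [hij, add_sub_cancel_left, zpow_one]
    · rfl
  · simp only [Unitary.coe_zpow_neg]
    exact Matrix.schurTwist_mul_diagonal_mul_star d e (γ.extend t).2 a

/-- Let `B` be a unital C*-algebra, `u ∈ B` unitary and `n ≥ 1`.  There is a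
continuous path `t ↦ W t`, `t ∈ [0, 1]`, of unitaries in `Mₙ(B)` from the companion-type
matrix (with `1`s below the diagonal and `u ^ n` in the upper right corner) to
`diag (u, …, u)` such that conjugation by every `W t` carries
`diag (u⁻¹ a u, …, u⁻ⁿ a uⁿ)` to `diag (a, u⁻¹ a u, …, u^{-(n-1)} a u^{n-1})` for all
`a ∈ B`.  (Indices are `0`-based.) -/
theorem exists_unitary_path_companion_to_diagonal
    {B : Type*} [CStarAlgebra B] (u : unitary B) {n : ℕ} (hn : 1 ≤ n) :
    ∃ W : ℝ → Matrix (Fin n) (Fin n) B,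
      ContinuousOn W (Set.Icc 0 1) ∧
      (∀ i j : Fin n, W 0 i j =
        if (i : ℕ) = (j : ℕ) + 1 then 1
        else if (i : ℕ) = 0 ∧ (j : ℕ) = n - 1 then ((u ^ n : unitary B) : B)
        else 0) ∧
      W 1 = Matrix.diagonal (fun _ : Fin n => (u : B)) ∧
      ∀ t ∈ Set.Icc (0 : ℝ) 1,
        W t ∈ unitary (Matrix (Fin n) (Fin n) B) ∧
        ∀ a : B,
          W t * Matrix.diagonal
                (fun i : Fin n => ((u ^ (-((i : ℤ) + 1)) : unitary B) : B) * a *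
                  ((u ^ ((i : ℤ) + 1) : unitary B) : B)) * star (W t) =
            Matrix.diagonal
              (fun i : Fin n => ((u ^ (-(i : ℤ)) : unitary B) : B) * a *
                ((u ^ ((i : ℤ)) : unitary B) : B)) :=
  exists_unitary_path_companion_to_diagonal_general u
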